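/- For every ordinal α < ω+ω and every integer n ≥ 1, the value f(p_α, n) is defined and satisfies 2^{f(p_α, n)} = m_α(2^n), where m_α denotes the Steinhaus–Moser functions. -/

import Mathlib

/-! ## Basic Laver patterns (raw data) -/

/-- `negGet l k` is the `k`-th entry of `l` counted from the end (1-indexed),
    i.e. `l_{-k}` in the paper's notation. -/
def negGet (l : List ℕ) (k : ℕ) : ℕ := l.getD (l.length - k) 0

/-- Raw data of a basic Laver pattern: a list of rows and a list of step lengths. -/
structure Blp where
  rows : List (List ℕ)
  steps : List ℕ

namespace Blp

/-- The length (number of rows) of the pattern. -/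
def n (p : Blp) : ℕ := p.rows.length

/-- The `i`-th row (1-indexed). -/
def rowOf (p : Blp) (i : ℕ) : List ℕ := p.rows.getD (i - 1) []

/-- The step length of row `i` (1-indexed). -/
def stepOf (p : Blp) (i : ℕ) : ℕ := p.steps.getD (i - 1) 0

def lastRow (p : Blp) : List ℕ := p.rows.getLastD []

def lastStep (p : Blp) : ℕ := p.steps.getLastD 0

/-- `p` is a basic Laver pattern (blp). -/
def IsValid (p : Blp) : Prop :=
  2 ≤ p.n ∧ p.steps.length = p.n ∧
  p.rowOf 1 = [0, 1, 2] ∧ p.rowOf 2 = [0, 1, 2, 3] ∧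
  ∀ i, 1 ≤ i → i ≤ p.n →
    List.Chain' (· < ·) (p.rowOf i) ∧
    3 ≤ (p.rowOf i).length ∧
    negGet (p.rowOf i) 2 = i ∧ negGet (p.rowOf i) 1 = i + 1 ∧
    (Odd (p.rowOf i).length → p.stepOf i = ((p.rowOf i).length - 1) / 2) ∧
    ((p.rowOf i).length = 4 → p.stepOf i = 1) ∧
    (Even (p.rowOf i).length → 4 < (p.rowOf i).length →
      p.stepOf i = (p.rowOf i).length / 2 ∨ p.stepOf i = (p.rowOf i).length / 2 - 1)

/-- Delete the last row. -/
def del (p : Blp) : Blp := ⟨p.rows.dropLast, p.steps.dropLast⟩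

end Blp

/-- The partial map `ap(s,t,ℓ)` is defined. -/
def ApDefined (s t : List ℕ) (ℓ : ℕ) : Prop :=
  0 < negGet t (ℓ + 2) ∧ ℓ + 2 ≤ t.length ∧
  (∀ x ∈ s, x ≤ negGet t (ℓ + 1)) ∧
  (∀ x ∈ s, t.headD 0 ≤ x → x < negGet t (ℓ + 2) → x ∈ t)

/-- The effect of `ap(·,t,ℓ)` on a single entry. -/
def apEntry (t : List ℕ) (ℓ x : ℕ) : ℕ :=
  if x < t.headD 0 then x
  else if x < negGet t (ℓ + 2) then t.getD (t.idxOf x + ℓ) 0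
  else negGet t 2 + x - negGet t (ℓ + 2)

/-- The sequence `ap(s,t,ℓ)` (total function; meaningful when `ApDefined s t ℓ`). -/
def apF (s t : List ℕ) (ℓ : ℕ) : List ℕ := s.map (apEntry t ℓ)

namespace Blp

/-- `a = s_{n,-ℓ_n-2}` in the definition of the copying operation. -/
def copyA (p : Blp) : ℕ := negGet p.lastRow (p.lastStep + 2)

/-- `b = s_{n,-ℓ_n-1} - 1` in the definition of the copying operation. -/
def copyB (p : Blp) : ℕ := negGet p.lastRow (p.lastStep + 1) - 1

/-- `p` is copyable. -/
def Copyable (p : Blp) : Prop :=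
  3 ≤ p.n ∧
  ∀ i ≤ p.copyB - p.copyA, ApDefined (p.rowOf (p.copyA + i)) p.lastRow p.lastStep

/-- `p.Copied` (meaningful when `p` is copyable). -/
def Copied (p : Blp) : Blp :=
  ⟨p.rows.dropLast ++
     (List.range (p.copyB - p.copyA + 1)).map
       (fun i => apF (p.rowOf (p.copyA + i)) p.lastRow p.lastStep),
   p.steps.dropLast ++
     (List.range (p.copyB - p.copyA + 1)).map (fun i => p.stepOf (p.copyA + i))⟩

/-- The zero blp is the unique blp of length 2. -/
def IsZero (p : Blp) : Prop := p.n = 2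

/-- `p` is of successor type. -/
def IsSuccType (p : Blp) : Prop := p.lastRow.take 3 = [0, 1, 2] ∧ p.lastRow.length = 5

/-- `p` is of limit type. -/
def IsLimitType (p : Blp) : Prop :=
  p.lastRow.take 3 = [0, 1, 2] ∧ p.lastRow.length = 6 ∧ p.lastStep = 3

/-- Append the auxiliary row `(a, n'+1, n'+2)` (with step length 1) to `q`. -/
def eExtend (q : Blp) (a : ℕ) : Blp :=
  ⟨q.rows ++ [[a, q.n + 1, q.n + 2]], q.steps ++ [1]⟩

/-- The operation `p.E(m)` for `p` of limit or successor type. -/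
def Eop (p : Blp) : ℕ → Blp
  | 0 => p.del
  | m + 1 => (eExtend (p.Eop m) (negGet p.lastRow 3)).Copied

end Blp

/-- Row `i + r` in the completion operation `comp(p,i,T)`:
insert `t_1, …, t_{r+1}` after position `ℓ` of `s` and replace the last entry by
`i+1, …, i+r+1`. -/
def compRow (s : List ℕ) (ℓ i r : ℕ) (T : List ℕ) : List ℕ :=
  (s.take ℓ ++ T.take (r + 1) ++ s.drop ℓ).dropLast ++
    (List.range (r + 1)).map (fun j => i + 1 + j)

namespace Blp

/-- The completion operation `comp(p,i,T)`. -/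
def comp (p : Blp) (i : ℕ) (T : List ℕ) : Blp :=
  ⟨p.rows.take (i - 1) ++
     (List.range (T.length + 1)).map (fun r => compRow (p.rowOf i) (p.stepOf i) i r T) ++
     (p.rows.drop i).map (List.map (fun x => if i < x then x + T.length else x)),
   p.steps.take (i - 1) ++
     ((List.range T.length).map (fun r => p.stepOf i + r + 1) ++ [p.stepOf i + T.length]) ++
     p.steps.drop i⟩

/-- The (descending) chain `x_1, x_2, …` with `x_{r+1} = s_{x_r,-3}`, stopping
as soon as the value is `≤ lo` (that final value is not collected). -/
def descChain (p : Blp) (lo : ℕ) : ℕ → ℕ → List ℕ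
  | 0, _ => []
  | fuel + 1, x =>
    let nx := negGet (p.rowOf x) 3
    if nx ≤ lo then [] else nx :: p.descChain lo fuel nx

/-- `fullcomp(p,i)` for a suitable row `i`. -/
def fullcomp (p : Blp) (i : ℕ) : Blp :=
  p.comp i
    ((p.descChain ((p.rowOf i).getD (p.stepOf i - 1) 0)
        ((p.rowOf i).getD (p.stepOf i) 0 + 1) ((p.rowOf i).getD (p.stepOf i) 0)).reverse)

/-- The (increasing) list of indices of suitable rows (rows of odd length `≥ 5`). -/
def suitableIdx (p : Blp) : List ℕ :=
  (List.range p.n).filterMap fun j =>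
    if 5 ≤ (p.rowOf (j + 1)).length ∧ (p.rowOf (j + 1)).length % 2 = 1 then some (j + 1)
    else none

/-- The modification operation `p.M`: apply `fullcomp` to `p.Copied` at the suitable
indices of `p`, in decreasing order. -/
def Mop (p : Blp) : Blp := p.suitableIdx.reverse.foldl (fun q i => q.fullcomp i) p.Copied

end Blp

/- The graph of the partial recursive function `f(p,m)` of the paper
(`FRel p m r` means `f(p,m)` is defined with value `r`), together with the graph
`FIter q k x r` of the `k`-fold iterate of `x ↦ f(q,x)` at `x`. -/
mutual
  inductive FRel : Blp → ℕ → ℕ → Prop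
    | zero (p : Blp) (m : ℕ) : p.IsZero → FRel p m (m * 2 ^ m)
    | notCopyable (p : Blp) (m r : ℕ) :
        ¬p.IsZero → ¬p.Copyable → FRel p.del m r → FRel p m r
    | succ (p : Blp) (m r : ℕ) :
        ¬p.IsZero → p.Copyable → p.IsSuccType → FIter p.del (2 ^ m) m r → FRel p m r
    | limit (p : Blp) (m r : ℕ) :
        ¬p.IsZero → p.Copyable → ¬p.IsSuccType → p.IsLimitType →
        FRel (p.Eop m) m r → FRel p m r
    | trans (p : Blp) (m r : ℕ) :
        ¬p.IsZero → p.Copyable → ¬p.IsSuccType → ¬p.IsLimitType →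
        FRel p.Mop m r → FRel p m r
  inductive FIter : Blp → ℕ → ℕ → ℕ → Prop
    | base (q : Blp) (x : ℕ) : FIter q 0 x x
    | step (q : Blp) (k x y r : ℕ) : FIter q k x y → FRel q y r → FIter q (k + 1) x r
end

/-! ## Ordinals below ε₀ via `ONote`, fundamental sequences, pattern sequences -/

/-- `o` denotes a successor ordinal (for `o` in normal form). -/
def isSuccO : ONote → Bool
  | .zero => false
  | .oadd e _ .zero => decide (e = ONote.zero)
  | .oadd _ _ (.oadd e' c' a') => isSuccO (.oadd e' c' a')

/-- The predecessor of a (successor) ordinal notation. -/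
def predO : ONote → ONote
  | .zero => .zero
  | .oadd e c .zero => if e = ONote.zero then ONote.ofNat ((c : ℕ) - 1) else .oadd e c .zero
  | .oadd e c (.oadd e' c' a') => .oadd e c (predO (.oadd e' c' a'))

/-- The canonical fundamental sequence: `fsO o k` is `o[k]` (meaningful for `o` in
normal form denoting a limit ordinal), obtained from the unique decomposition
`o = β + ω^γ` via `(ω^(δ+1))[k] = ω^δ·k` and `(ω^γ)[k] = ω^(γ[k])` for `γ` limit. -/
def fsO : ONote → ℕ → ONote
  | .zero, _ => .zero
  | .oadd e c (.oadd e' c' a'), k => .oadd e c (fsO (.oadd e' c' a') k)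
  | .oadd e c .zero, k =>
    let t : ONote :=
      if e = ONote.zero then .zero
      else if isSuccO e then
        (if h : k = 0 then .zero else .oadd (predO e) ⟨k, Nat.pos_of_ne_zero h⟩ .zero)
      else .oadd (fsO e k) 1 .zero
    if c = 1 then t else .oadd e (c - 1) t

/-- Auxiliary for the pattern sequence: process the Cantor normal form terms of `o`
from the left, starting from the already-computed list `L`. -/
def psFrom : List ℕ → ONote → List ℕ
  | L, .zero => L
  | L, .oadd e c a =>
    let pe := psFrom [] e
    let step : List ℕ → List ℕ := fun M =>
      if e = ONote.zero then M ++ [0]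
      else M ++ [0] ++ pe.map (· + (M.length + 1)) ++ [M.length + 1]
    psFrom (step^[(c : ℕ)] L) a

/-- The pattern sequence `ps(α)` of an ordinal `α < ε₀`. -/
def psO (o : ONote) : List ℕ := psFrom [] o

/-- The fundamental sequence for `ε₀` itself: `ε₀[0] = 1`, `ε₀[n+1] = ω^(ε₀[n])`. -/
def eps0fs : ℕ → ONote
  | 0 => 1
  | k + 1 => .oadd (eps0fs k) 1 .zero

/-- The graph of the Hardy hierarchy `H_α(n)` for `α < ε₀`:
`HardyRel o n r` means `H_{repr o}(n) = r`. -/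
inductive HardyRel : ONote → ℕ → ℕ → Prop
  | zero (n : ℕ) : HardyRel 0 n n
  | succ (o : ONote) (n r : ℕ) : HardyRel o (n + 1) r → HardyRel (o + 1) n r
  | limit (o : ONote) (n r : ℕ) :
      Order.IsSuccLimit (ONote.repr o) → HardyRel (fsO o n) (n + 1) r → HardyRel o n r

/- The graph of the `m`-hierarchy `m(α,n)` for `α < ε₀` (`MRel o n r` means
`m(repr o, n) = r`), together with the graph `MIter o k x r` of the `k`-fold
iterate of `x ↦ m(repr o, x)` at `x`. -/
mutual
  inductive MRel : ONote → ℕ → ℕ → Prop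
    | zero (n : ℕ) : MRel 0 n (n ^ n)
    | succ (o : ONote) (n r : ℕ) : MIter o n n r → MRel (o + 1) n r
    | limit (o : ONote) (n r : ℕ) :
        Order.IsSuccLimit (ONote.repr o) → MRel (fsO o n) n r → MRel o n r
  inductive MIter : ONote → ℕ → ℕ → ℕ → Prop
    | base (o : ONote) (x : ℕ) : MIter o 0 x x
    | step (o : ONote) (k x y r : ℕ) : MIter o k x y → MRel o y r → MIter o (k + 1) x r
end

/-! ## The specific patterns `q_n`, `p_α` -/

/-- The blp `q_n` with `2^n + 4` rows. -/
def qBlp (n : ℕ) : Blp :=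
  ⟨[[0, 1, 2], [0, 1, 2, 3], [0, 1, 2, 3, 4]] ++
     (List.range (2 ^ n + 1)).map (fun j => [0, 1, 2, j + 3, j + 4, j + 5]),
   [1, 1, 2] ++ List.replicate (2 ^ n + 1) 3⟩

/-- The Steinhaus–Moser functions `m_k` for finite `k`. -/
def mSMfin : ℕ → ℕ → ℕ
  | 0, n => n ^ n
  | k + 1, n => (mSMfin k)^[n] n

/-- The Steinhaus–Moser functions `m_{ω+k}`; `mSMomega 0 = m_ω` with `m_ω(n) = m_n(n)`. -/
def mSMomega : ℕ → ℕ → ℕ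
  | 0, n => mSMfin n n
  | k + 1, n => (mSMomega k)^[n] n

/-- The canonical blps `p_k` for finite `k`. -/
def pFin : ℕ → Blp
  | 0 => ⟨[[0, 1, 2], [0, 1, 2, 3]], [1, 1]⟩
  | k + 1 =>
    ⟨(pFin k).rows ++ [[0, 1, 2, (pFin k).n + 1, (pFin k).n + 2]], (pFin k).steps ++ [2]⟩

/-- The canonical blps `p_{ω+k}`. -/
def pOmegaBlp : ℕ → Blp
  | 0 => ⟨[[0, 1, 2], [0, 1, 2, 3], [0, 1, 2, 3, 4], [0, 1, 2, 3, 4, 5]], [1, 1, 2, 3]⟩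
  | k + 1 =>
    ⟨(pOmegaBlp k).rows ++ [[0, 1, 2, (pOmegaBlp k).n + 1, (pOmegaBlp k).n + 2]],
     (pOmegaBlp k).steps ++ [2]⟩

/-- The canonical blps `p_α` for `α < ω + ω`, with `Sum.inl k ↦ p_k` and
`Sum.inr k ↦ p_{ω+k}`. -/
def pSM : ℕ ⊕ ℕ → Blp
  | .inl k => pFin k
  | .inr k => pOmegaBlp k

/-- The Steinhaus–Moser functions `m_α` for `α < ω + ω`, with `Sum.inl k ↦ m_k` and
`Sum.inr k ↦ m_{ω+k}`. -/
def mSM : ℕ ⊕ ℕ → ℕ → ℕ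
  | .inl k => mSMfin k
  | .inr k => mSMomega k

/-- The canonical blp `p_α` for `α < ε₀`, built from the pattern sequence `ps(α)`. -/
def pOf (o : ONote) : Blp :=
  ⟨[[0, 1, 2], [0, 1, 2, 3]] ++
     (List.range (psO o).length).map (fun j =>
       if (psO o).getD j 0 = 0 then [0, 1, 2, j + 3, j + 4]
       else [0, 1, 2, (psO o).getD j 0 + 2, j + 3, j + 4]),
   [1, 1] ++ (psO o).map (fun t => if t = 0 then 2 else 3)⟩

/-! ## Knuth arrows and Graham's number -/

/-- Knuth's up-arrow: `knuth m a b = a ↑^m b` (with `↑^0` multiplication and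
`↑^1` exponentiation). -/
def knuth : ℕ → ℕ → ℕ → ℕ
  | 0, a, b => a * b
  | 1, a, b => a ^ b
  | _ + 2, _, 0 => 1
  | m + 2, a, b + 1 => knuth (m + 1) a (knuth (m + 2) a b)
  termination_by m _ b => (m, b)

/-- `grahamSeq k = g_{k+1}`: `g_1 = 3↑↑↑↑3`, `g_{k+1} = 3 ↑^{g_k} 3`. -/
def grahamSeq : ℕ → ℕ
  | 0 => knuth 4 3 3
  | k + 1 => knuth (grahamSeq k) 3 3

/-- Graham's number `G = g_64`. -/
def grahamNumber : ℕ := grahamSeq 63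

/-! ### Auxiliary lemmas -/

lemma blp_ext (p q : Blp) (h1 : p.rows = q.rows) (h2 : p.steps = q.steps) : p = q := by
  cases p; cases q; simp_all

lemma pFin_explicit (k : ℕ) :
    (pFin k).rows = [[0,1,2],[0,1,2,3]] ++ (List.range k).map (fun j => [0,1,2,j+3,j+4]) ∧
    (pFin k).steps = [1,1] ++ List.replicate k 2 := by
  induction k with
  | zero => exact ⟨rfl, rfl⟩
  | succ k ih =>
    obtain ⟨hr, hs⟩ := ih
    have hn : (pFin k).n = k + 2 := by simp [Blp.n, hr]
    constructor
    · show (pFin k).rows ++ [[0,1,2,(pFin k).n + 1,(pFin k).n + 2]] = _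
      rw [hr, hn, List.range_succ]
      simp
    · show (pFin k).steps ++ [2] = _
      rw [hs, List.replicate_succ']
      simp

lemma pFin_n (k : ℕ) : (pFin k).n = k + 2 := by
  simp [Blp.n, (pFin_explicit k).1]

lemma pFin_first (k : ℕ) : (pFin k).rows.getD 0 [] = [0,1,2] := by
  rw [(pFin_explicit k).1]; rfl

lemma pOmega_n (k : ℕ) : (pOmegaBlp k).n = k + 4 := by
  induction k with
  | zero => rfl
  | succ k ih =>
    show ((pOmegaBlp k).rows ++ _).length = _
    simp [Blp.n] at ih ⊢
    omega

lemma pOmega_first (k : ℕ) : (pOmegaBlp k).rows.getD 0 [] = [0,1,2] := by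
  induction k with
  | zero => rfl
  | succ k ih =>
    show ((pOmegaBlp k).rows ++ _).getD 0 [] = _
    rw [List.getD_append _ _ _ _ (by have := pOmega_n k; simp [Blp.n] at this; omega)]
    exact ih

/-- The pattern obtained by appending a successor-type row. -/
def succExt (p : Blp) : Blp := ⟨p.rows ++ [[0,1,2,p.n+1,p.n+2]], p.steps ++ [2]⟩

lemma pFin_succ_eq (k : ℕ) : pFin (k+1) = succExt (pFin k) := rfl
lemma pOmega_succ_eq (k : ℕ) : pOmegaBlp (k+1) = succExt (pOmegaBlp k) := rfl

lemma succExt_del (p : Blp) : (succExt p).del = p := by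
  simp only [succExt, Blp.del, List.dropLast_concat]

lemma succExt_n (p : Blp) : (succExt p).n = p.n + 1 := by
  simp [succExt, Blp.n]

lemma succExt_not_zero (p : Blp) (hn : 2 ≤ p.n) : ¬(succExt p).IsZero := by
  intro h
  have hq : (succExt p).n = p.n + 1 := succExt_n p
  unfold Blp.IsZero at h
  omega

lemma succExt_lastRow (p : Blp) : (succExt p).lastRow = [0,1,2,p.n+1,p.n+2] := by
  simp only [succExt, Blp.lastRow, List.getLastD_concat]

lemma succExt_lastStep (p : Blp) : (succExt p).lastStep = 2 := by
  simp only [succExt, Blp.lastStep, List.getLastD_concat]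

lemma succExt_succType (p : Blp) : (succExt p).IsSuccType := by
  refine ⟨?_, ?_⟩ <;> rw [succExt_lastRow] <;> rfl

lemma succExt_copyable (p : Blp) (h0 : p.rows.getD 0 [] = [0,1,2]) (hn : 2 ≤ p.n) :
    (succExt p).Copyable := by
  have hA : (succExt p).copyA = 1 := by
    unfold Blp.copyA; rw [succExt_lastRow, succExt_lastStep]; rfl
  have hB : (succExt p).copyB = 1 := by
    unfold Blp.copyB; rw [succExt_lastRow, succExt_lastStep]; rfl
  refine ⟨by rw [succExt_n]; omega, ?_⟩
  intro i hi
  rw [hA, hB] at hi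
  have hi0 : i = 0 := by omega
  subst hi0
  have hrow : (succExt p).rowOf 1 = [0,1,2] := by
    show ((p.rows ++ _).getD 0 []) = _
    rw [List.getD_append _ _ _ _ (by change 2 ≤ p.rows.length at hn; omega)]
    exact h0
  rw [hA, succExt_lastRow, succExt_lastStep, Nat.add_zero, hrow]
  refine ⟨by norm_num [negGet], by norm_num [negGet], by norm_num [negGet], ?_⟩
  intro x hx h1 h2
  have h4 : negGet [0,1,2,p.n+1,p.n+2] (2+2) = 1 := rfl
  rw [h4] at h2
  fin_cases hx <;> simp_all

lemma fiter_of_frel (p : Blp) (M : ℕ → ℕ)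
    (h : ∀ x, 1 ≤ x → ∃ r, 1 ≤ r ∧ FRel p x r ∧ 2 ^ r = M (2 ^ x)) :
    ∀ j x, 1 ≤ x → ∃ y, 1 ≤ y ∧ FIter p j x y ∧ 2 ^ y = M^[j] (2 ^ x) := by
  intro j
  induction j with
  | zero => intro x hx; exact ⟨x, hx, FIter.base p x, by simp⟩
  | succ j ih =>
    intro x hx
    obtain ⟨y, hy1, hit, hval⟩ := ih x hx
    obtain ⟨r, hr1, hrel, hrval⟩ := h y hy1
    refine ⟨r, hr1, FIter.step p j x y r hit hrel, ?_⟩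
    rw [Function.iterate_succ_apply', ← hval, hrval]

/-! ### The copying computation for `Eop` of `p_ω` -/

lemma getD_two_add {α : Type*} (a b : α) (l : List α) (i : ℕ) (d : α) :
    (a :: b :: l).getD (i + 2) d = l.getD i d := rfl

lemma getD_map_range (f : ℕ → List ℕ) (k i : ℕ) (hi : i < k) (d : List ℕ) :
    ((List.range k).map f).getD i d = f i := by
  rw [List.getD_eq_getElem _ _ (by simpa using hi)]
  simp

lemma apEntry_elt (k x : ℕ) : apEntry [3,k+3,k+4] 1 x = if x < 3 then x else k + x := by
  simp only [apEntry, negGet, List.headD]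
  norm_num
  split_ifs <;> omega

lemma apF_row (k i : ℕ) :
    apF [0,1,2,i+3,i+4] [3,k+3,k+4] 1 = [0,1,2,k+i+3,k+i+4] := by
  simp only [apF, List.map_cons, List.map_nil, apEntry_elt]
  rw [if_pos (by norm_num : (0:ℕ) < 3), if_pos (by norm_num : (1:ℕ) < 3),
      if_pos (by norm_num : (2:ℕ) < 3), if_neg (by omega : ¬ i + 3 < 3),
      if_neg (by omega : ¬ i + 4 < 3), ← Nat.add_assoc k i 3, ← Nat.add_assoc k i 4]

lemma copied_eExtend_pFin (k : ℕ) (hk : 1 ≤ k) :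
    ((pFin k).eExtend 3).Copied = pFin (2 * k) := by
  obtain ⟨hr, hs⟩ := pFin_explicit k
  have hn := pFin_n k
  set q := (pFin k).eExtend 3 with hq
  have hqrows : q.rows = (pFin k).rows ++ [[3, k+3, k+4]] := by
    show (pFin k).rows ++ [[3, (pFin k).n + 1, (pFin k).n + 2]] = _
    rw [hn]
  have hqsteps : q.steps = (pFin k).steps ++ [1] := rfl
  have hlr : q.lastRow = [3,k+3,k+4] := by
    rw [Blp.lastRow, hqrows, List.getLastD_concat]
  have hls : q.lastStep = 1 := by
    rw [Blp.lastStep, hqsteps, List.getLastD_concat]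
  have hA : q.copyA = 3 := by unfold Blp.copyA; rw [hlr, hls]; rfl
  have hB : q.copyB = k + 2 := by unfold Blp.copyB; rw [hlr, hls]; rfl
  have hrowlen : (pFin k).rows.length = k + 2 := hn
  have hsteplen : (pFin k).steps.length = k + 2 := by rw [hs]; simp
  have hrow : ∀ i < k, q.rowOf (3 + i) = [0,1,2,i+3,i+4] := by
    intro i hi
    show q.rows.getD (3 + i - 1) [] = _
    have h32 : 3 + i - 1 = i + 2 := by omega
    rw [h32, hqrows, List.getD_append _ _ _ _ (by omega), hr]
    rw [show ([[0,1,2],[0,1,2,3]] ++ (List.range k).map (fun j => [0,1,2,j+3,j+4]) : List (List ℕ))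
        = [0,1,2] :: [0,1,2,3] :: (List.range k).map (fun j => [0,1,2,j+3,j+4]) from rfl]
    rw [getD_two_add, getD_map_range _ _ _ hi]
  have hstep : ∀ i < k, q.stepOf (3 + i) = 2 := by
    intro i hi
    show q.steps.getD (3 + i - 1) 0 = 2
    have h32 : 3 + i - 1 = i + 2 := by omega
    rw [h32, hqsteps, List.getD_append _ _ _ _ (by omega), hs]
    rw [show ([1,1] ++ List.replicate k 2 : List ℕ) = 1 :: 1 :: List.replicate k 2 from rfl]
    rw [getD_two_add]
    rw [List.getD_eq_getElem _ _ (by simpa using hi)]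
    simp
  have hrange : q.copyB - q.copyA + 1 = k := by rw [hA, hB]; omega
  apply blp_ext
  · show q.rows.dropLast ++ _ = _
    rw [hrange]
    simp only [hA, hlr, hls]
    rw [hqrows, List.dropLast_concat]
    rw [List.map_congr_left (fun i hi => by
      rw [hrow i (List.mem_range.mp hi), apF_row])]
    rw [(pFin_explicit (2*k)).1, hr, two_mul, List.range_add, List.map_append, List.map_map]
    rw [List.append_assoc]
    congr 1
  · show q.steps.dropLast ++ _ = _
    rw [hrange]
    simp only [hA]
    rw [hqsteps, List.dropLast_concat]
    rw [List.map_congr_left (fun i hi => hstep i (List.mem_range.mp hi))]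
    rw [(pFin_explicit (2*k)).2, hs, two_mul, List.replicate_add]
    rw [List.append_assoc]
    congr 1
    rw [List.map_const']
    simp

lemma eop_pOmega (m : ℕ) : (pOmegaBlp 0).Eop m = pFin (2 ^ m) := by
  induction m with
  | zero => rfl
  | succ m ih =>
    show (Blp.eExtend ((pOmegaBlp 0).Eop m) (negGet (pOmegaBlp 0).lastRow 3)).Copied = _
    rw [ih, show negGet (pOmegaBlp 0).lastRow 3 = 3 from rfl,
        copied_eExtend_pFin _ (Nat.one_le_two_pow)]
    congr 1
    rw [pow_succ]
    ring

/-! ### Concrete facts about `p_ω` -/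

lemma pOmega0_not_zero : ¬(pOmegaBlp 0).IsZero := by
  unfold Blp.IsZero; decide

lemma pOmega0_not_succ : ¬(pOmegaBlp 0).IsSuccType := by
  unfold Blp.IsSuccType; decide

lemma pOmega0_limit : (pOmegaBlp 0).IsLimitType := by
  unfold Blp.IsLimitType; refine ⟨rfl, rfl, rfl⟩

lemma pOmega0_copyable : (pOmegaBlp 0).Copyable := by
  refine ⟨by decide, ?_⟩
  intro i hi
  have h0 : (pOmegaBlp 0).copyB - (pOmegaBlp 0).copyA = 0 := by decide
  rw [h0, Nat.le_zero] at hi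
  subst hi
  unfold ApDefined
  refine ⟨by decide, by decide, by decide, by decide⟩

/-! ### The main induction -/

lemma lemA : ∀ k n, 1 ≤ n → ∃ r, 1 ≤ r ∧ FRel (pFin k) n r ∧ 2 ^ r = mSMfin k (2 ^ n) := by
  intro k
  induction k with
  | zero =>
    intro n hn
    refine ⟨n * 2 ^ n, ?_, FRel.zero _ n rfl, ?_⟩
    · exact Nat.mul_pos hn (by positivity)
    · show 2 ^ (n * 2 ^ n) = (2 ^ n) ^ (2 ^ n)
      rw [pow_mul]
  | succ k ih =>
    intro n hn
    obtain ⟨y, hy1, hit, hval⟩ := fiter_of_frel (pFin k) (mSMfin k) ih (2 ^ n) n hn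
    refine ⟨y, hy1, ?_, ?_⟩
    · rw [pFin_succ_eq]
      refine FRel.succ _ n y (succExt_not_zero _ (by rw [pFin_n]; omega))
        (succExt_copyable _ (pFin_first k) (by rw [pFin_n]; omega))
        (succExt_succType _) ?_
      rw [succExt_del]
      exact hit
    · rw [hval]; rfl

lemma lemB : ∀ k n, 1 ≤ n → ∃ r, 1 ≤ r ∧ FRel (pOmegaBlp k) n r ∧ 2 ^ r = mSMomega k (2 ^ n) := by
  intro k
  induction k with
  | zero =>
    intro n hn
    obtain ⟨r, hr1, hrel, hval⟩ := lemA (2 ^ n) n hn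
    refine ⟨r, hr1, ?_, ?_⟩
    · exact FRel.limit _ n r pOmega0_not_zero pOmega0_copyable pOmega0_not_succ
        pOmega0_limit (by rw [eop_pOmega]; exact hrel)
    · rw [hval]; rfl
  | succ k ih =>
    intro n hn
    obtain ⟨y, hy1, hit, hval⟩ := fiter_of_frel (pOmegaBlp k) (mSMomega k) ih (2 ^ n) n hn
    refine ⟨y, hy1, ?_, ?_⟩
    · rw [pOmega_succ_eq]
      refine FRel.succ _ n y (succExt_not_zero _ (by rw [pOmega_n]; omega))
        (succExt_copyable _ (pOmega_first k) (by rw [pOmega_n]; omega))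
        (succExt_succType _) ?_
      rw [succExt_del]
      exact hit
    · rw [hval]; rfl



/-- For every ordinal `α < ω + ω` (encoded as `Sum.inl k ↦ k`,
`Sum.inr k ↦ ω + k`) and every `n ≥ 1`, the value `f(p_α, n)` is defined and
`2^{f(p_α,n)} = m_α(2^n)`. -/
theorem two_pow_f_p_alpha_eq_SteinhausMoser :
    ∀ a : ℕ ⊕ ℕ, ∀ n : ℕ, 1 ≤ n →
      ∃ r : ℕ, FRel (pSM a) n r ∧ 2 ^ r = mSM a (2 ^ n) := by
  rintro (k | k) n hn
  · obtain ⟨r, _, h1, h2⟩ := lemA k n hn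
    exact ⟨r, h1, h2⟩
  · obtain ⟨r, _, h1, h2⟩ := lemB k n hn
    exact ⟨r, h1, h2⟩
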